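/- Fix an integer T ≥ 1. Then the regret at horizon T grows without bound in the number of outcomes: the sequence K ↦ (V^{(K)} T 0 − T)/√T tends to +∞ as K → ∞; equivalently, the map K ↦ V^{(K)} T 0 tends to +∞ as K → ∞. -/
import Mathlib


open scoped BigOperators

noncomputable section

def simplex (K : ℕ) : Set (Fin K → ℝ) :=
  {q | (∀ k, 0 ≤ q k) ∧ ∑ k, q k = 1}

def simplexInt (K : ℕ) : Set (Fin K → ℝ) :=
  {r | (∀ k, 0 < r k) ∧ ∑ k, r k = 1}

noncomputable def V (K : ℕ) : ℕ → (Fin K → ℝ) → ℝ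
  | 0, s => ⨆ k, s k
  | H + 1, s =>
      sInf ((fun r : Fin K → ℝ =>
        sSup ((fun q : Fin K → ℝ => V K H (fun k => s k + q k / r k)) '' simplex K))
        '' simplexInt K)

section Aux

variable {K : ℕ}

lemma single_mem_simplex (k : Fin K) :
    (fun j => if j = k then (1:ℝ) else 0) ∈ simplex K := by
  constructor
  · intro j; dsimp only; split <;> norm_num
  · simp

lemma uniform_mem_simplexInt (hK : 0 < K) :
    (fun _ : Fin K => (K:ℝ)⁻¹) ∈ simplexInt K := by
  have hKR : (0:ℝ) < K := by exact_mod_cast hK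
  constructor
  · intro _; positivity
  · simp [Finset.sum_const, mul_inv_cancel₀ hKR.ne']

lemma simplex_coord_le_one {q : Fin K → ℝ} (hq : q ∈ simplex K) (k : Fin K) : q k ≤ 1 := by
  have := Finset.single_le_sum (f := q) (fun j _ => hq.1 j) (Finset.mem_univ k)
  rw [hq.2] at this
  exact this

lemma V_bounds (hK : 0 < K) : ∀ H : ℕ, ∀ t : Fin K → ℝ,
    (⨆ k, t k) ≤ V K H t ∧ V K H t ≤ (⨆ k, t k) + H * K := by
  haveI : NeZero K := ⟨hK.ne'⟩
  intro H
  induction H with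
  | zero => intro t; simp [V]
  | succ H ih =>
    intro t
    have hbddA : ∀ u : Fin K → ℝ, BddAbove (Set.range u) :=
      fun u => (Set.finite_range u).bddAbove
    -- Inner sets are bounded above
    have hInner : ∀ r ∈ simplexInt K,
        BddAbove ((fun q : Fin K → ℝ => V K H (fun k => t k + q k / r k)) '' simplex K) := by
      intro r hr
      set ε := Finset.univ.inf' Finset.univ_nonempty r with hε
      have hεpos : 0 < ε := by
        rw [hε, Finset.lt_inf'_iff]
        exact fun j _ => hr.1 j
      refine ⟨(⨆ k, t k) + 1 / ε + H * K, ?_⟩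
      rintro x ⟨q, hq, rfl⟩
      refine le_trans (ih _).2 ?_
      have hsup : (⨆ k, t k + q k / r k) ≤ (⨆ k, t k) + 1 / ε := by
        refine ciSup_le fun k => add_le_add (le_ciSup (hbddA t) k) ?_
        exact div_le_div₀ zero_le_one (simplex_coord_le_one hq k) hεpos
          (Finset.inf'_le r (Finset.mem_univ k))
      linarith
    -- Inner sets are nonempty
    have hInnerNe : ∀ r : Fin K → ℝ,
        ((fun q : Fin K → ℝ => V K H (fun k => t k + q k / r k)) '' simplex K).Nonempty :=
      fun r => ⟨_, ⟨_, single_mem_simplex (0 : Fin K), rfl⟩⟩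
    -- Each inner sSup is at least ⨆ t
    have hLow : ∀ r ∈ simplexInt K,
        (⨆ k, t k) ≤ sSup ((fun q : Fin K → ℝ => V K H (fun k => t k + q k / r k)) '' simplex K) := by
      intro r hr
      refine le_trans ?_ (le_csSup (hInner r hr) ⟨_, single_mem_simplex (0 : Fin K), rfl⟩)
      refine le_trans ?_ (ih _).1
      refine ciSup_le fun k => le_ciSup_of_le (hbddA _) k ?_
      have : 0 ≤ (if k = (0 : Fin K) then (1:ℝ) else 0) / r k := by
        apply div_nonneg _ (hr.1 k).le
        split <;> norm_num
      linarith
    have huni := uniform_mem_simplexInt (K := K) hK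
    -- The outer set
    have hOuterBdd : BddBelow ((fun r : Fin K → ℝ =>
        sSup ((fun q : Fin K → ℝ => V K H (fun k => t k + q k / r k)) '' simplex K))
        '' simplexInt K) := by
      refine ⟨⨆ k, t k, ?_⟩
      rintro x ⟨r, hr, rfl⟩
      exact hLow r hr
    constructor
    · show (⨆ k, t k) ≤ sInf _
      refine le_csInf ⟨_, ⟨_, huni, rfl⟩⟩ ?_
      rintro x ⟨r, hr, rfl⟩
      exact hLow r hr
    · show sInf _ ≤ _
      refine le_trans (csInf_le hOuterBdd ⟨_, huni, rfl⟩) ?_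
      refine csSup_le (hInnerNe _) ?_
      rintro x ⟨q, hq, rfl⟩
      refine le_trans (ih _).2 ?_
      have hs : (⨆ k, t k + q k / ((K:ℝ)⁻¹)) ≤ (⨆ k, t k) + K := by
        refine ciSup_le fun k => add_le_add (le_ciSup (hbddA t) k) ?_
        rw [div_eq_mul_inv, inv_inv]
        nlinarith [simplex_coord_le_one hq k, hq.1 k, (by positivity : (0:ℝ) ≤ (K:ℝ))]
      have hc : ((H + 1 : ℕ) : ℝ) * K = K + H * K := by push_cast; ring
      linarith

lemma V_lower (hK : 0 < K) (H : ℕ) (t : Fin K → ℝ) :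
    (⨅ k, t k) + K ≤ V K (H + 1) t := by
  haveI : NeZero K := ⟨hK.ne'⟩
  have hKR : (0:ℝ) < K := by exact_mod_cast hK
  show _ ≤ sInf _
  refine le_csInf ⟨_, ⟨_, uniform_mem_simplexInt hK, rfl⟩⟩ ?_
  rintro x ⟨r, hr, rfl⟩
  obtain ⟨k, hk⟩ : ∃ k, r k ≤ (K:ℝ)⁻¹ := by
    by_contra h
    push_neg at h
    have h1 : (1:ℝ) < ∑ j, r j := by
      calc (1:ℝ) = ∑ _j : Fin K, (K:ℝ)⁻¹ := by
            simp [Finset.sum_const, mul_inv_cancel₀ hKR.ne']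
        _ < ∑ j, r j :=
            Finset.sum_lt_sum_of_nonempty Finset.univ_nonempty (fun j _ => h j)
    rw [hr.2] at h1
    exact lt_irrefl _ h1
  -- bddAbove of inner set, as in V_bounds
  have hInner : BddAbove ((fun q : Fin K → ℝ =>
      V K H (fun k => t k + q k / r k)) '' simplex K) := by
    set ε := Finset.univ.inf' Finset.univ_nonempty r with hε
    have hεpos : 0 < ε := by
      rw [hε, Finset.lt_inf'_iff]
      exact fun j _ => hr.1 j
    refine ⟨(⨆ k, t k) + 1 / ε + H * K, ?_⟩
    rintro x ⟨q, hq, rfl⟩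
    refine le_trans ((V_bounds hK H _).2) ?_
    have hsup : (⨆ k, t k + q k / r k) ≤ (⨆ k, t k) + 1 / ε := by
      refine ciSup_le fun j => add_le_add (le_ciSup ((Set.finite_range t).bddAbove) j) ?_
      exact div_le_div₀ zero_le_one (simplex_coord_le_one hq j) hεpos
        (Finset.inf'_le r (Finset.mem_univ j))
    linarith
  refine le_trans ?_ (le_csSup hInner ⟨_, single_mem_simplex k, rfl⟩)
  refine le_trans ?_ ((V_bounds hK H _).1)
  refine le_trans ?_ (le_ciSup ((Set.finite_range _).bddAbove) k)
  have hb : (fun j => if j = k then (1:ℝ) else 0) k = 1 := by simp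
  rw [hb]
  have h1 : (⨅ j, t j) ≤ t k := ciInf_le ((Set.finite_range t).bddBelow) k
  have h2 : (K:ℝ) ≤ 1 / r k := by
    rw [le_div_iff₀ (hr.1 k)]
    calc (K:ℝ) * r k ≤ (K:ℝ) * (K:ℝ)⁻¹ := mul_le_mul_of_nonneg_left hk hKR.le
      _ = 1 := mul_inv_cancel₀ hKR.ne'
  linarith

end Aux

/-- For a fixed horizon `T ≥ 1`, the regret `(V^{(K)} T 0 − T)/√T` tends to `+∞`
as the number of outcomes `K → ∞`; equivalently, `K ↦ V^{(K)} T 0` tends to `+∞`. -/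
theorem regret_unbounded_in_K (T : ℕ) (hT : 1 ≤ T) :
    Filter.Tendsto (fun K : ℕ => (V K T 0 - (T : ℝ)) / Real.sqrt T)
      Filter.atTop Filter.atTop ∧
    Filter.Tendsto (fun K : ℕ => V K T 0) Filter.atTop Filter.atTop := by
  obtain ⟨T', rfl⟩ : ∃ T', T = T' + 1 := ⟨T - 1, by omega⟩
  have key : ∀ K : ℕ, 1 ≤ K → (K : ℝ) ≤ V K (T' + 1) 0 := by
    intro K hK
    haveI : NeZero K := ⟨by omega⟩
    have := V_lower (K := K) (by omega) T' 0
    simpa using this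
  have h2 : Filter.Tendsto (fun K : ℕ => V K (T' + 1) 0) Filter.atTop Filter.atTop := by
    refine Filter.tendsto_atTop_mono' _ ?_ tendsto_natCast_atTop_atTop
    filter_upwards [Filter.eventually_ge_atTop 1] with K hK
    exact key K hK
  refine ⟨?_, h2⟩
  have hsqrt : 0 < Real.sqrt (T' + 1 : ℕ) := by
    apply Real.sqrt_pos.mpr
    positivity
  have h3 : Filter.Tendsto (fun K : ℕ => V K (T' + 1) 0 - ((T' + 1 : ℕ) : ℝ))
      Filter.atTop Filter.atTop := by
    simpa [sub_eq_add_neg] using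
      Filter.tendsto_atTop_add_const_right Filter.atTop (-((T' + 1 : ℕ) : ℝ)) h2
  exact h3.atTop_div_const hsqrt
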